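/- Let n ≥ 2 and let Q be a positive integer. Let (G(k))_{k≥1} be rooted communication graphs on n nodes and Ĝ(ℓ) = G((ℓ−1)(n−1)+1) ∘ ⋯ ∘ G(ℓ(n−1)) the macro-round graphs. Let x : ℕ → ℝ^n be the quantized amortized mid-point execution: every x(0)_p lies in [0,1] and is an integer multiple of 1/Q, and for each ℓ ≥ 1 and each p, x(ℓ)_p = ⌊Q·(m_p + M_p)/2⌋/Q, where m_p = min{x(ℓ−1)_q : q ∈ In_p(Ĝ(ℓ))} and M_p = max{x(ℓ−1)_q : q ∈ In_p(Ĝ(ℓ))}. Then for every ℓ ≥ 0, δ(x(ℓ)) ≤ 2^{−ℓ} + (2/Q)·(1 − 2^{−ℓ}). -/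
import Mathlib

/-- `δ(x) = max_p x_p − min_p x_p`. -/
noncomputable def delta {n : ℕ} (x : Fin n → ℝ) : ℝ :=
  sSup (Set.range x) - sInf (Set.range x)

/-- A communication graph is rooted if there is a node `r` from which every node is
reachable by a directed path. -/
def Rooted {n : ℕ} (E : Fin n → Fin n → Prop) : Prop :=
  ∃ r, ∀ p, Relation.ReflTransGen E r p

/-- `ProdSeg G a m` is the product `G (a+1) ∘ G (a+2) ∘ ⋯ ∘ G (a+m)`, where the product
`G ∘ H` has an edge `(p,q)` iff there is `r` with `(p,r) ∈ G` and `(r,q) ∈ H`;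
the empty product is the identity graph. -/
def ProdSeg {n : ℕ} (G : ℕ → Fin n → Fin n → Prop) (a : ℕ) : ℕ → Fin n → Fin n → Prop
  | 0 => fun p q => p = q
  | m + 1 => fun p q => ∃ r, ProdSeg G a m p r ∧ G (a + m + 1) r q

/-- Rounding down to the nearest multiple of `1/Q`. -/
noncomputable def roundQ (Q : ℕ) (v : ℝ) : ℝ := (⌊(Q : ℝ) * v⌋ : ℝ) / (Q : ℝ)

section Aux

variable {n : ℕ}

lemma prodSeg_cons (G : ℕ → Fin n → Fin n → Prop) (b m : ℕ) (r p : Fin n) :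
    ProdSeg G b (m+1) r p ↔ ∃ v, G (b+1) r v ∧ ProdSeg G (b+1) m v p := by
  induction m generalizing p with
  | zero =>
      constructor
      · rintro ⟨w, hw, hG⟩
        exact ⟨p, by cases hw; simpa using hG, rfl⟩
      · rintro ⟨v, hv, hvp⟩
        exact ⟨r, rfl, by cases hvp; simpa using hv⟩
  | succ m ih =>
      constructor
      · rintro ⟨w, hw, hG⟩
        obtain ⟨v, hv, hvw⟩ := (ih _).mp hw
        exact ⟨v, hv, ⟨w, hvw, by simpa [Nat.add_assoc, Nat.add_comm, Nat.add_left_comm] using hG⟩⟩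
      · rintro ⟨v, hv, ⟨w, hvw, hG⟩⟩
        exact ⟨w, (ih _).mpr ⟨v, hv, hvw⟩, by simpa [Nat.add_assoc, Nat.add_comm, Nat.add_left_comm] using hG⟩

lemma prodSeg_refl (G : ℕ → Fin n → Fin n → Prop)
    (hrefl : ∀ k, 1 ≤ k → ∀ p, G k p p) (b m : ℕ) (p : Fin n) :
    ProdSeg G b m p p := by
  induction m with
  | zero => rfl
  | succ m ih => exact ⟨p, ih, hrefl (b + m + 1) (by omega) p⟩

lemma root_mem_closed {E : Fin n → Fin n → Prop} {r : Fin n}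
    (hr : ∀ p, Relation.ReflTransGen E r p) {S : Finset (Fin n)}
    (hcl : ∀ u v, E u v → v ∈ S → u ∈ S) (hne : S.Nonempty) : r ∈ S := by
  obtain ⟨v, hv⟩ := hne
  have key : ∀ v, Relation.ReflTransGen E r v → v ∈ S → r ∈ S := by
    intro v hrv
    induction hrv with
    | refl => exact fun h => h
    | tail hab hbc ih => exact fun hc => ih (hcl _ _ hbc hc)
  exact key v (hr v) hv

lemma nonsplit (hn : 2 ≤ n) (G : ℕ → Fin n → Fin n → Prop)
    (hrefl : ∀ k, 1 ≤ k → ∀ p, G k p p)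
    (hrooted : ∀ k, 1 ≤ k → Rooted (G k)) (a : ℕ) (p q : Fin n) :
    ∃ r, ProdSeg G a (n-1) r p ∧ ProdSeg G a (n-1) r q := by
  classical
  set J : ℕ → Fin n → Finset (Fin n) :=
    fun m s => Finset.univ.filter (fun r => ProdSeg G (a + (n-1) - m) m r s) with hJ
  have hmem : ∀ m s r, r ∈ J m s ↔ ProdSeg G (a + (n-1) - m) m r s := by
    intro m s r; simp [hJ]
  have hself : ∀ m s, s ∈ J m s := fun m s => (hmem m s s).mpr (prodSeg_refl G hrefl _ _ s)
  have hmono : ∀ m, m + 1 ≤ n - 1 → ∀ s, J m s ⊆ J (m+1) s := by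
    intro m hm s r hr
    rw [hmem] at hr ⊢
    have key : a + (n-1) - (m+1) + 1 = a + (n-1) - m := by omega
    rw [prodSeg_cons]
    exact ⟨r, by rw [key]; exact hrefl _ (by omega) r, by rw [key]; exact hr⟩
  -- pre-image description of J (m+1)
  have hpre : ∀ m, m + 1 ≤ n - 1 → ∀ s u,
      u ∈ J (m+1) s ↔ ∃ v, G (a + (n-1) - m) u v ∧ v ∈ J m s := by
    intro m hm s u
    have key : a + (n-1) - (m+1) + 1 = a + (n-1) - m := by omega
    rw [hmem, prodSeg_cons, key]
    simp only [hmem]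
  have hinv : ∀ m, m ≤ n - 1 →
      ((J m p ∩ J m q).Nonempty ∨ m + 2 ≤ (J m p).card + (J m q).card) := by
    intro m
    induction m with
    | zero =>
        intro _
        right
        have h1 : 1 ≤ (J 0 p).card := Finset.card_pos.mpr ⟨p, hself 0 p⟩
        have h2 : 1 ≤ (J 0 q).card := Finset.card_pos.mpr ⟨q, hself 0 q⟩
        omega
    | succ m ih =>
        intro hm1
        have hm : m ≤ n - 1 := by omega
        rcases ih hm with hne | hcard
        · left
          obtain ⟨r, hr⟩ := hne
          rw [Finset.mem_inter] at hr
          exact ⟨r, Finset.mem_inter.mpr ⟨hmono m hm1 p hr.1, hmono m hm1 q hr.2⟩⟩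
        · by_cases hne' : (J (m+1) p ∩ J (m+1) q).Nonempty
          · left; exact hne'
          · right
            have hcp : (J m p).card ≤ (J (m+1) p).card := Finset.card_le_card (hmono m hm1 p)
            have hcq : (J m q).card ≤ (J (m+1) q).card := Finset.card_le_card (hmono m hm1 q)
            have hgrow : (J m p).card < (J (m+1) p).card ∨ (J m q).card < (J (m+1) q).card := by
              by_contra hno
              push_neg at hno
              have heqp : J m p = J (m+1) p :=
                Finset.eq_of_subset_of_card_le (hmono m hm1 p) hno.1
              have heqq : J m q = J (m+1) q :=
                Finset.eq_of_subset_of_card_le (hmono m hm1 q) hno.2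
              obtain ⟨rt, hrt⟩ := hrooted (a + (n-1) - m) (by omega)
              have hclp : ∀ u v, G (a + (n-1) - m) u v → v ∈ J m p → u ∈ J m p := by
                intro u v huv hv
                rw [heqp]; exact (hpre m hm1 p u).mpr ⟨v, huv, hv⟩
              have hclq : ∀ u v, G (a + (n-1) - m) u v → v ∈ J m q → u ∈ J m q := by
                intro u v huv hv
                rw [heqq]; exact (hpre m hm1 q u).mpr ⟨v, huv, hv⟩
              have h1 : rt ∈ J m p := root_mem_closed hrt hclp ⟨p, hself m p⟩
              have h2 : rt ∈ J m q := root_mem_closed hrt hclq ⟨q, hself m q⟩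
              exact hne' ⟨rt, Finset.mem_inter.mpr ⟨hmono m hm1 p h1, hmono m hm1 q h2⟩⟩
            omega
  have hfin : (J (n-1) p ∩ J (n-1) q).Nonempty := by
    rcases hinv (n-1) le_rfl with h | h
    · exact h
    · by_contra hne
      rw [Finset.not_nonempty_iff_eq_empty] at hne
      have hd : Disjoint (J (n-1) p) (J (n-1) q) :=
        Finset.disjoint_iff_inter_eq_empty.mpr hne
      have hu := Finset.card_union_of_disjoint hd
      have hle : (J (n-1) p ∪ J (n-1) q).card ≤ n := by
        simpa using Finset.card_le_univ (J (n-1) p ∪ J (n-1) q)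
      omega
  obtain ⟨r, hr⟩ := hfin
  rw [Finset.mem_inter, hmem, hmem, Nat.add_sub_cancel] at hr
  exact ⟨r, hr.1, hr.2⟩

lemma roundQ_le {Q : ℕ} (hQ : 1 ≤ Q) (v : ℝ) : roundQ Q v ≤ v := by
  have hQ' : (0:ℝ) < Q := by exact_mod_cast Nat.pos_of_ne_zero (by omega)
  rw [roundQ, div_le_iff₀ hQ']
  calc ((⌊(Q:ℝ) * v⌋ : ℤ) : ℝ) ≤ (Q:ℝ) * v := Int.floor_le _
    _ = v * Q := mul_comm _ _

lemma lt_roundQ {Q : ℕ} (hQ : 1 ≤ Q) (v : ℝ) : v - 1 / Q < roundQ Q v := by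
  have hQ' : (0:ℝ) < Q := by exact_mod_cast Nat.pos_of_ne_zero (by omega)
  rw [roundQ, lt_div_iff₀ hQ']
  have h := Int.sub_one_lt_floor ((Q:ℝ) * v)
  have : (v - 1 / Q) * Q = Q * v - 1 := by field_simp
  rw [this]
  exact_mod_cast h

lemma delta_le_pair {n : ℕ} [Nonempty (Fin n)] (x : Fin n → ℝ) {c : ℝ}
    (h : ∀ p q, x p - x q ≤ c) : delta x ≤ c := by
  have hfin := Set.finite_range x
  have hne := Set.range_nonempty x
  obtain ⟨p, hp⟩ := Set.mem_range.mp (hne.csSup_mem hfin)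
  obtain ⟨q, hq⟩ := Set.mem_range.mp (hne.csInf_mem hfin)
  rw [delta, ← hp, ← hq]
  exact h p q

end Aux

theorem quantized_amortized_midpoint_contraction
    (n Q : ℕ) (hn : 2 ≤ n) (hQ : 1 ≤ Q)
    (G : ℕ → Fin n → Fin n → Prop)
    (hrefl : ∀ k, 1 ≤ k → ∀ p, G k p p)
    (hrooted : ∀ k, 1 ≤ k → Rooted (G k))
    (x : ℕ → Fin n → ℝ)
    (hx0 : ∀ p, x 0 p ∈ Set.Icc (0 : ℝ) 1 ∧ ∃ z : ℤ, x 0 p = (z : ℝ) / (Q : ℝ))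
    (hupd : ∀ l, 1 ≤ l → ∀ p,
      x l p = roundQ Q
        ((sInf (x (l - 1) '' {q | ProdSeg G ((l - 1) * (n - 1)) (n - 1) q p}) +
          sSup (x (l - 1) '' {q | ProdSeg G ((l - 1) * (n - 1)) (n - 1) q p})) / 2)) :
    ∀ l : ℕ, delta (x l) ≤ (1 / 2 : ℝ) ^ l + (2 / (Q : ℝ)) * (1 - (1 / 2 : ℝ) ^ l) := by
  have hnety : Nonempty (Fin n) := ⟨⟨0, by omega⟩⟩
  have hQ' : (0:ℝ) < Q := by exact_mod_cast Nat.pos_of_ne_zero (by omega)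
  -- one-step contraction
  have key : ∀ l : ℕ, delta (x (l+1)) ≤ delta (x l) / 2 + 1 / Q := by
    intro l
    set a := l * (n - 1) with ha
    have hu : ∀ p, x (l+1) p = roundQ Q
        ((sInf (x l '' {q | ProdSeg G a (n-1) q p}) +
          sSup (x l '' {q | ProdSeg G a (n-1) q p})) / 2) := by
      intro p
      have := hupd (l+1) (by omega) p
      simpa [ha] using this
    set y := x l with hy
    have hfinR : (Set.range y).Finite := Set.finite_range y
    have hbA : BddAbove (Set.range y) := hfinR.bddAbove
    have hbB : BddBelow (Set.range y) := hfinR.bddBelow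
    have hpair : ∀ p q, x (l+1) p - x (l+1) q ≤ delta y / 2 + 1 / Q := by
      intro p q
      obtain ⟨r, hrp, hrq⟩ := nonsplit hn G hrefl hrooted a p q
      set Sp := y '' {s | ProdSeg G a (n-1) s p} with hSp
      set Sq := y '' {s | ProdSeg G a (n-1) s q} with hSq
      have hsubp : Sp ⊆ Set.range y := Set.image_subset_range y _
      have hsubq : Sq ⊆ Set.range y := Set.image_subset_range y _
      have hSpfin : Sp.Finite := hfinR.subset hsubp
      have hSqfin : Sq.Finite := hfinR.subset hsubq
      have hSpne : Sp.Nonempty := ⟨y r, ⟨r, hrp, rfl⟩⟩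
      have hSqne : Sq.Nonempty := ⟨y r, ⟨r, hrq, rfl⟩⟩
      have h1 : sInf Sp ≤ y r := csInf_le hSpfin.bddBelow ⟨r, hrp, rfl⟩
      have h2 : y r ≤ sSup Sq := le_csSup hSqfin.bddAbove ⟨r, hrq, rfl⟩
      have h3 : sSup Sp ≤ sSup (Set.range y) :=
        csSup_le hSpne fun z hz => le_csSup hbA (hsubp hz)
      have h4 : sInf (Set.range y) ≤ sInf Sq :=
        le_csInf hSqne fun z hz => csInf_le hbB (hsubq hz)
      have hb1 : x (l+1) p ≤ (sInf Sp + sSup Sp) / 2 := by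
        rw [hu p]; exact roundQ_le hQ _
      have hb2 : (sInf Sq + sSup Sq) / 2 - 1 / Q < x (l+1) q := by
        rw [hu q]; exact lt_roundQ hQ _
      have hdel : delta y = sSup (Set.range y) - sInf (Set.range y) := rfl
      linarith
    exact delta_le_pair _ hpair
  have base : delta (x 0) ≤ 1 := by
    apply delta_le_pair
    intro p q
    have h1 := (hx0 p).1
    have h2 := (hx0 q).1
    rw [Set.mem_Icc] at h1 h2
    linarith [h1.1, h1.2, h2.1, h2.2]
  intro l
  induction l with
  | zero => simpa using base
  | succ l ih =>
      have h := key l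
      calc delta (x (l+1)) ≤ delta (x l) / 2 + 1 / Q := h
        _ ≤ ((1/2:ℝ)^l + (2/(Q:ℝ)) * (1 - (1/2:ℝ)^l)) / 2 + 1 / Q := by linarith
        _ = (1/2:ℝ)^(l+1) + (2/(Q:ℝ)) * (1 - (1/2:ℝ)^(l+1)) := by ring
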